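/- Let Δ be a k-dimensional simplicial complex on [s] with Stanley-Reisner ideal I_Δ in S = K[x_1,…,x_s] over a field K. Then for all n ≥ 1, the top a-invariants of the ordinary and symbolic powers coincide: a_{k+1}(S/I_Δ^{(n)}) = a_{k+1}(S/I_Δ^n). -/

import Mathlib

open MvPolynomial

variable (K : Type) [Field K] {N : ℕ}

/-- The "negative support" `G_α = {i : α i < 0}` of an exponent vector `α ∈ ℤ^N`. -/
def negSupp (α : Fin N → ℤ) : Finset (Fin N) :=
  Finset.univ.filter (fun i => α i < 0)

/-- The multiplicative set generated by the variables `x_i`, `i ∈ W`. -/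
noncomputable def varMonoid (W : Finset (Fin N)) : Submonoid (MvPolynomial (Fin N) K) :=
  Submonoid.closure ((fun i => (X i : MvPolynomial (Fin N) K)) '' ↑W)

/-- The Laurent monomial `x^α` in the localization `S[x_i^{-1} : i ∈ W]`,
for `α ∈ ℤ^N` whose negative support is contained in `W`. -/
noncomputable def xPow (α : Fin N → ℤ) (W : Finset (Fin N)) (h : negSupp α ⊆ W) :
    Localization (varMonoid K W) :=
  algebraMap (MvPolynomial (Fin N) K) _ (∏ i, X i ^ (α i).toNat) *
    IsLocalization.mk' (Localization (varMonoid K W)) (1 : MvPolynomial (Fin N) K)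
      (⟨∏ i ∈ negSupp α, X i ^ (-(α i)).toNat,
        Submonoid.prod_mem _ (fun i hi =>
          pow_mem (Submonoid.subset_closure
            (Set.mem_image_of_mem _ (Finset.mem_coe.mpr (h hi)))) _)⟩ : varMonoid K W)

/-- The degree complex `Δ_α(I)` of a monomial ideal `I`:
`F ∈ Δ_α(I)` iff `F ⊆ [N] ∖ G_α` and `x^α ∉ I·S[x_i^{-1} : i ∈ F ∪ G_α]`. -/
def degreeComplex (I : Ideal (MvPolynomial (Fin N) K)) (α : Fin N → ℤ) :
    Set (Finset (Fin N)) :=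
  {F | Disjoint F (negSupp α) ∧
    xPow K α (F ∪ negSupp α) (Finset.subset_union_right) ∉
      Ideal.map (algebraMap (MvPolynomial (Fin N) K)
        (Localization (varMonoid K (F ∪ negSupp α)))) I}

/-- The module of simplicial `K`-chains of `Δ` spanned by the faces of cardinality `m`. -/
abbrev chainModule (Δ : Set (Finset (Fin N))) (m : ℕ) : Type :=
  {F : Finset (Fin N) // F ∈ Δ ∧ F.card = m} →₀ K

open Classical in
/-- The simplicial boundary map from `m`-cardinality+1 chains to `m`-cardinality chains,
sending a face `F` to `∑_{i ∈ F} (-1)^{|{j ∈ F : j < i}|} (F ∖ {i})`. -/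
noncomputable def bdry (Δ : Set (Finset (Fin N))) (m : ℕ) :
    chainModule K Δ (m + 1) →ₗ[K] chainModule K Δ m :=
  Finsupp.lsum K (fun F =>
    ∑ i ∈ F.1.attach,
      ((-1 : K) ^ (F.1.filter (fun j => j < i.1)).card) •
        (if h : (F.1.erase i.1) ∈ Δ then
          Finsupp.lsingle (⟨F.1.erase i.1, h, by
            simp [Finset.card_erase_of_mem i.2, F.2.2]⟩ :
              {G : Finset (Fin N) // G ∈ Δ ∧ G.card = m})
        else 0))

/-- The full boundary map `∂_m : C_m → C_{m-1}`, with `∂_0 = 0`. -/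
noncomputable def bdryFrom (Δ : Set (Finset (Fin N))) :
    (m : ℕ) → (chainModule K Δ m →ₗ[K] chainModule K Δ (m - 1))
  | 0 => 0
  | (n + 1) => bdry K Δ n

/-- The reduced simplicial homology `H̃_{m-1}(Δ; K) = ker ∂_m / im ∂_{m+1}`,
indexed by the cardinality level `m` (so dimension `m - 1`). -/
noncomputable def homologyAtLevel (Δ : Set (Finset (Fin N))) (m : ℕ) : Type :=
  letI : HasQuotient (LinearMap.ker (bdryFrom K Δ m))
      (Submodule K (LinearMap.ker (bdryFrom K Δ m))) := by exact Submodule.hasQuotient (R := K) (M := LinearMap.ker (bdryFrom K Δ m))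
  LinearMap.ker (bdryFrom K Δ m) ⧸
    Submodule.comap (LinearMap.ker (bdryFrom K Δ m)).subtype
      (LinearMap.range (bdry K Δ m))

/-- `H̃_d(Δ; K) ≠ 0`, for an arbitrary integer dimension `d`
(nonzero is only possible when `d ≥ -1`). -/
def reducedHomologyNonzero (Δ : Set (Finset (Fin N))) (d : ℤ) : Prop :=
  ∃ m : ℕ, (m : ℤ) = d + 1 ∧ Nontrivial (homologyAtLevel K Δ m)

/-- The Stanley–Reisner ideal of `Δ`, generated by the squarefree monomials
`x_F = ∏_{i ∈ F} x_i` over the non-faces `F` of `Δ`. -/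
noncomputable def stanleyReisner (Δ : Set (Finset (Fin N))) : Ideal (MvPolynomial (Fin N) K) :=
  Ideal.span {f | ∃ F : Finset (Fin N), F ∉ Δ ∧ f = ∏ i ∈ F, X i}

/-- The monomial prime `P_F = (x_i : i ∉ F)`. -/
noncomputable def facePrime (F : Finset (Fin N)) : Ideal (MvPolynomial (Fin N) K) :=
  Ideal.span {f | ∃ i : Fin N, i ∉ F ∧ f = X i}

/-- The set of facets (maximal faces) of `Δ`. -/
def facets (Δ : Set (Finset (Fin N))) : Set (Finset (Fin N)) :=
  {F | F ∈ Δ ∧ ∀ G ∈ Δ, F ⊆ G → F = G}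

/-- `Δ` is a simplicial complex: closed under taking subsets. -/
def DownClosed (Δ : Set (Finset (Fin N))) : Prop :=
  ∀ F ∈ Δ, ∀ G : Finset (Fin N), G ⊆ F → G ∈ Δ

/-- The `n`-th symbolic power `I_Δ^{(n)} = ⋂_{F facet of Δ} P_F^n`
of the Stanley–Reisner ideal of `Δ`. -/
noncomputable def symbolicPowerSR (Δ : Set (Finset (Fin N))) (n : ℕ) : Ideal (MvPolynomial (Fin N) K) :=
  ⨅ F ∈ facets Δ, (facePrime K F) ^ n

/-- The simplicial complex `Δ(I) = {F : x_F ∉ √I}` attached to a monomial ideal `I`. -/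
def complexOfIdeal (I : Ideal (MvPolynomial (Fin N) K)) : Set (Finset (Fin N)) :=
  {F | (∏ i ∈ F, X i) ∉ I.radical}

/-- The set of degrees `t` in which the `i`-th graded local cohomology module
`H^i_m(S/I)_t` of a monomial quotient is nonzero; by Takayama's formula this is
expressed through the degree complexes: `H^i_m(S/I)_α ≠ 0` iff `G_α ∈ Δ(I)` and
`H̃_{i - |G_α| - 1}(Δ_α(I); K) ≠ 0`. -/
def localCohNonzeroDegrees (i : ℕ) (I : Ideal (MvPolynomial (Fin N) K)) : Set ℤ :=
  {t | ∃ α : Fin N → ℤ, (∑ j, α j) = t ∧ negSupp α ∈ complexOfIdeal K I ∧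
    reducedHomologyNonzero K (degreeComplex K I α) ((i : ℤ) - (negSupp α).card - 1)}

/-- The `a_i`-invariant `a_i(S/I) = max {t : H^i_m(S/I)_t ≠ 0}` of a monomial quotient,
via Takayama's formula. -/
noncomputable def aInvariant (i : ℕ) (I : Ideal (MvPolynomial (Fin N) K)) : ℤ :=
  sSup (localCohNonzeroDegrees K i I)

/-- The link of a face `G` in `Δ`. -/
def link (Δ : Set (Finset (Fin N))) (G : Finset (Fin N)) : Set (Finset (Fin N)) :=
  {F | Disjoint F G ∧ F ∪ G ∈ Δ}

/-- The pure `k`-skeleton of `Γ`: the subcomplex generated by the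
`k`-dimensional (i.e. `(k+1)`-element) faces of `Γ`. -/
def pureSkeleton (Γ : Set (Finset (Fin N))) (k : ℕ) : Set (Finset (Fin N)) :=
  {F | ∃ G ∈ Γ, G.card = k + 1 ∧ F ⊆ G}

/-!
Both `a`-invariants are read off Takayama's formula. Since `√(I_Δ^{(n)}) = √(I_Δ^n)`, the
condition `G_α ∈ Δ(I)` is the same for both ideals. Every face `F` of either degree complex
`Δ_α` has `F ∪ G_α ∈ Δ`, so `|F| ≤ m := k + 1 - |G_α|`, and the homology entering `a_{k+1}` is the
top one, `ker ∂_m`, which only involves the faces of cardinality `m`. For such a face,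
`W = F ∪ G_α` has `k + 1` elements and is a facet of `Δ`; once the variables of `W` are inverted,
`I_Δ^{(n)}` and `I_Δ^n` both become `P_W^n`, so `F` lies in both degree complexes or in neither.
-/

variable {K}

section StanleyReisner

variable {Δ : Set (Finset (Fin N))}

lemma monomial_mem_stanleyReisner {β : Fin N →₀ ℕ} (h : β.support ∉ Δ) (c : K) :
    monomial β c ∈ stanleyReisner K Δ := by
  rw [monomial_eq]
  refine Ideal.mul_mem_left _ _ (Ideal.mem_of_dvd _ ?_ (Ideal.subset_span ⟨β.support, h, rfl⟩))
  exact Finset.prod_dvd_prod_of_dvd _ _ fun i hi => dvd_pow_self _ (Finsupp.mem_support_iff.mp hi)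

lemma mem_facePrime_iff {F : Finset (Fin N)} {f : MvPolynomial (Fin N) K} :
    f ∈ facePrime K F ↔ ∀ β ∈ f.support, ∃ i ∉ F, β i ≠ 0 := by
  have hgen : {f | ∃ i, i ∉ F ∧ f = (X i : MvPolynomial (Fin N) K)} = X '' {i | i ∉ F} := by
    ext f
    simp [eq_comm]
  rw [facePrime, hgen, mem_ideal_span_X_image]
  rfl

lemma prod_X_mem_facePrime {F W : Finset (Fin N)} (h : ¬ W ⊆ F) :
    (∏ i ∈ W, (X i : MvPolynomial (Fin N) K)) ∈ facePrime K F := by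
  obtain ⟨i, hiW, hiF⟩ := Finset.not_subset.mp h
  rw [← Finset.mul_prod_erase _ _ hiW]
  exact Ideal.mul_mem_right _ _ (Ideal.subset_span ⟨i, hiF, rfl⟩)

lemma exists_mem_facets_superset {G : Finset (Fin N)} (hG : G ∈ Δ) :
    ∃ F ∈ facets Δ, G ⊆ F := by
  obtain ⟨F, hGF, hF⟩ := Finite.exists_le_maximal (p := (· ∈ Δ)) hG
  exact ⟨F, ⟨hF.prop, fun H hH hFH => le_antisymm hFH (hF.le_of_ge hH hFH)⟩, hGF⟩

lemma mem_facets_of_card_eq {k : ℕ} (hdim : ∀ G ∈ Δ, G.card ≤ k + 1) {F : Finset (Fin N)}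
    (hF : F ∈ Δ) (hcard : F.card = k + 1) : F ∈ facets Δ :=
  ⟨hF, fun G hG hFG => Finset.eq_of_subset_of_card_le hFG (hcard ▸ hdim G hG)⟩

lemma stanleyReisner_le_facePrime (hΔ : DownClosed Δ) {F : Finset (Fin N)} (hF : F ∈ Δ) :
    stanleyReisner K Δ ≤ facePrime K F := by
  rw [stanleyReisner, Ideal.span_le]
  rintro f ⟨W, hW, rfl⟩
  exact prod_X_mem_facePrime fun hWF => hW (hΔ F hF W hWF)

lemma pow_le_symbolicPowerSR (hΔ : DownClosed Δ) (n : ℕ) :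
    stanleyReisner K Δ ^ n ≤ symbolicPowerSR K Δ n :=
  le_iInf₂ fun _ hF => Ideal.pow_right_mono (stanleyReisner_le_facePrime hΔ hF.1) n

/-- A monomial outside `I_Δ` has a face as support; that face lies in a facet `F`, so the
monomial is not in `P_F`. -/
lemma symbolicPowerSR_le_stanleyReisner {n : ℕ} (hn : 1 ≤ n) :
    symbolicPowerSR K Δ n ≤ stanleyReisner K Δ := by
  intro f hf
  rw [f.as_sum]
  refine Ideal.sum_mem _ fun β hβ => monomial_mem_stanleyReisner (fun hβΔ => ?_) _
  obtain ⟨F, hF, hβF⟩ := exists_mem_facets_superset hβΔ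
  have hfF : f ∈ facePrime K F :=
    Ideal.pow_le_self (by omega) (Ideal.mem_iInf.mp (Ideal.mem_iInf.mp hf F) hF)
  obtain ⟨i, hiF, hβi⟩ := mem_facePrime_iff.mp hfF β hβ
  exact hiF (hβF (Finsupp.mem_support_iff.mpr hβi))

lemma radical_symbolicPowerSR (hΔ : DownClosed Δ) {n : ℕ} (hn : 1 ≤ n) :
    (symbolicPowerSR K Δ n).radical = (stanleyReisner K Δ ^ n).radical := by
  refine le_antisymm ?_ (Ideal.radical_mono (pow_le_symbolicPowerSR hΔ n))
  rw [Ideal.radical_pow _ (by omega)]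
  exact Ideal.radical_mono (symbolicPowerSR_le_stanleyReisner hn)

lemma complexOfIdeal_symbolicPowerSR (hΔ : DownClosed Δ) {n : ℕ} (hn : 1 ≤ n) :
    complexOfIdeal K (symbolicPowerSR K Δ n) = complexOfIdeal K (stanleyReisner K Δ ^ n) := by
  simp only [complexOfIdeal, radical_symbolicPowerSR hΔ hn]

lemma complexOfIdeal_stanleyReisner_pow_subset (n : ℕ) :
    complexOfIdeal K (stanleyReisner K Δ ^ n) ⊆ Δ := by
  intro W hW
  by_contra hWΔ
  have hgen : (∏ i ∈ W, X i : MvPolynomial (Fin N) K) ∈ stanleyReisner K Δ :=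
    Ideal.subset_span ⟨W, hWΔ, rfl⟩
  exact hW (Ideal.mem_radical_iff.mpr ⟨n, Ideal.pow_mem_pow hgen n⟩)

end StanleyReisner

section DegreeComplex

lemma prod_X_mem_varMonoid (W : Finset (Fin N)) :
    (∏ i ∈ W, (X i : MvPolynomial (Fin N) K)) ∈ varMonoid K W :=
  Submonoid.prod_mem _ fun i hi => Submonoid.subset_closure ⟨i, hi, rfl⟩

lemma varMonoid_mono {W W' : Finset (Fin N)} (h : W ⊆ W') : varMonoid K W ≤ varMonoid K W' :=
  Submonoid.closure_mono (Set.image_mono (Finset.coe_subset.mpr h))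

lemma xPow_mem_map_iff (J : Ideal (MvPolynomial (Fin N) K)) {α : Fin N → ℤ}
    {W : Finset (Fin N)} (h : negSupp α ⊆ W) :
    xPow K α W h ∈ J.map (algebraMap _ (Localization (varMonoid K W))) ↔
      ∃ u ∈ varMonoid K W, u * ∏ i, X i ^ (α i).toNat ∈ J := by
  rw [xPow, ← IsLocalization.mk'_eq_mul_mk'_one, IsLocalization.mk'_mem_map_algebraMap_iff]

variable {J : Ideal (MvPolynomial (Fin N) K)} {α : Fin N → ℤ}

lemma degreeComplex_downClosed : DownClosed (degreeComplex K J α) := by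
  refine fun F hF F' hF'F => ⟨hF.1.mono_left hF'F, fun hmem => hF.2 ?_⟩
  obtain ⟨u, hu, huJ⟩ := (xPow_mem_map_iff J _).mp hmem
  exact (xPow_mem_map_iff J _).mpr
    ⟨u, varMonoid_mono (Finset.union_subset_union_left hF'F) hu, huJ⟩

/-- A power of `x_{F ∪ G_α}` in `J` would make `J` the unit ideal once the variables of
`F ∪ G_α` are inverted. -/
lemma union_negSupp_mem_complexOfIdeal {F : Finset (Fin N)} (hF : F ∈ degreeComplex K J α) :
    F ∪ negSupp α ∈ complexOfIdeal K J := by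
  rintro ⟨t, ht⟩
  exact hF.2 <| (xPow_mem_map_iff J _).mpr
    ⟨_, pow_mem (prod_X_mem_varMonoid _) t, J.mul_mem_right _ ht⟩

lemma card_add_card_negSupp_le {Δ : Set (Finset (Fin N))} (hJΔ : complexOfIdeal K J ⊆ Δ)
    {k : ℕ} (hdim : ∀ G ∈ Δ, G.card ≤ k + 1) {F : Finset (Fin N)}
    (hF : F ∈ degreeComplex K J α) : F.card + (negSupp α).card ≤ k + 1 := by
  rw [← Finset.card_union_of_disjoint hF.1]
  exact hdim _ (hJΔ (union_negSupp_mem_complexOfIdeal hF))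

end DegreeComplex

section Facet

variable {Δ : Set (Finset (Fin N))} {W : Finset (Fin N)}

lemma map_facePrime_le_map_stanleyReisner (hW : W ∈ facets Δ) :
    (facePrime K W).map (algebraMap _ (Localization (varMonoid K W))) ≤
      (stanleyReisner K Δ).map (algebraMap _ (Localization (varMonoid K W))) := by
  rw [facePrime, Ideal.map_span, Ideal.span_le]
  rintro _ ⟨_, ⟨i, hiW, rfl⟩, rfl⟩
  refine (IsLocalization.algebraMap_mem_map_algebraMap_iff (varMonoid K W) _ _ _).mpr
    ⟨_, prod_X_mem_varMonoid W, ?_⟩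
  have hins : insert i W ∉ Δ := fun hmem =>
    hiW (hW.2 _ hmem (Finset.subset_insert i W) ▸ Finset.mem_insert_self i W)
  rw [mul_comm, ← Finset.prod_insert hiW]
  exact Ideal.subset_span ⟨_, hins, rfl⟩

/-- Both sides become the `n`-th power of `P_W` once the variables of `W` are inverted. -/
lemma map_symbolicPowerSR_eq_map_pow (hΔ : DownClosed Δ) (hW : W ∈ facets Δ) (n : ℕ) :
    (symbolicPowerSR K Δ n).map (algebraMap _ (Localization (varMonoid K W))) =
      (stanleyReisner K Δ ^ n).map (algebraMap _ (Localization (varMonoid K W))) := by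
  refine le_antisymm ?_ (Ideal.map_mono (pow_le_symbolicPowerSR hΔ n))
  calc (symbolicPowerSR K Δ n).map (algebraMap _ (Localization (varMonoid K W)))
      ≤ (facePrime K W ^ n).map (algebraMap _ (Localization (varMonoid K W))) :=
        Ideal.map_mono (iInf₂_le W hW)
    _ ≤ (stanleyReisner K Δ ^ n).map (algebraMap _ (Localization (varMonoid K W))) := by
        rw [Ideal.map_pow, Ideal.map_pow]
        exact Ideal.pow_right_mono (map_facePrime_le_map_stanleyReisner hW) n

lemma mem_degreeComplex_symbolicPowerSR_iff (hΔ : DownClosed Δ) {α : Fin N → ℤ}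
    {F : Finset (Fin N)} (hF : F ∪ negSupp α ∈ facets Δ) (n : ℕ) :
    F ∈ degreeComplex K (symbolicPowerSR K Δ n) α ↔
      F ∈ degreeComplex K (stanleyReisner K Δ ^ n) α := by
  simp only [degreeComplex, Set.mem_ofPred_eq, map_symbolicPowerSR_eq_map_pow hΔ hF n]

end Facet

section TopHomology

variable {Γ Γ' : Set (Finset (Fin N))} {m : ℕ}

lemma bdry_eq_zero_of_card_le (h : ∀ F ∈ Γ, F.card ≤ m) : bdry K Γ m = 0 := by
  have : IsEmpty {F : Finset (Fin N) // F ∈ Γ ∧ F.card = m + 1} :=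
    ⟨fun F => absurd F.2.2 (by have := h F.1 F.2.1; omega)⟩
  exact LinearMap.ext fun c => by rw [Subsingleton.elim c 0, map_zero]; rfl

lemma nontrivial_homologyAtLevel_iff (h : ∀ F ∈ Γ, F.card ≤ m) :
    Nontrivial (homologyAtLevel K Γ m) ↔ LinearMap.ker (bdryFrom K Γ m) ≠ ⊥ := by
  unfold homologyAtLevel
  rw [bdry_eq_zero_of_card_le h, LinearMap.range_zero, Submodule.comap_bot,
    Submodule.ker_subtype]
  refine Submodule.Quotient.nontrivial_iff.trans ?_
  rw [Ne, subsingleton_iff_bot_eq_top, Submodule.subsingleton_iff, not_subsingleton_iff_nontrivial,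
    Submodule.nontrivial_iff_ne_bot]

/-- The coefficient of `G` in `∂ (a • F)`. -/
def bdryCoeff (F G : Finset (Fin N)) (a : K) : K :=
  ∑ i ∈ F.attach, if F.erase i.1 = G then (-1 : K) ^ (F.filter (· < i.1)).card * a else 0

lemma bdry_apply (hΓ : DownClosed Γ) (c : chainModule K Γ (m + 1))
    (G : {G : Finset (Fin N) // G ∈ Γ ∧ G.card = m}) :
    bdry K Γ m c G = c.sum fun F a => bdryCoeff F.1 G.1 a := by
  rw [bdry, Finsupp.lsum_apply, Finsupp.sum, Finsupp.sum, Finset.sum_apply']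
  refine Finset.sum_congr rfl fun F _ => ?_
  rw [LinearMap.sum_apply, Finset.sum_apply', bdryCoeff]
  refine Finset.sum_congr rfl fun i _ => ?_
  rw [LinearMap.smul_apply, dif_pos (hΓ F.1 F.2.1 _ (Finset.erase_subset _ _)),
    Finsupp.lsingle_apply, Finsupp.smul_apply, Finsupp.single_apply]
  by_cases heq : F.1.erase i.1 = G.1
  · rw [if_pos (Subtype.ext heq), if_pos heq, smul_eq_mul]
  · rw [if_neg (fun h => heq (congrArg Subtype.val h)), if_neg heq, smul_zero]

lemma bdry_eq_zero_iff (hΓ : DownClosed Γ) (c : chainModule K Γ (m + 1)) :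
    bdry K Γ m c = 0 ↔ ∀ G : Finset (Fin N), (c.sum fun F a => bdryCoeff F.1 G a) = 0 := by
  refine ⟨fun h G => ?_, fun h => Finsupp.ext fun G => by rw [bdry_apply hΓ, h]; rfl⟩
  by_cases hG : G ∈ Γ ∧ G.card = m
  · simpa [h] using (bdry_apply hΓ c ⟨G, hG⟩).symm
  · refine Finset.sum_eq_zero fun F _ => Finset.sum_eq_zero fun i _ => if_neg fun heq => hG ?_
    refine heq ▸ ⟨hΓ F.1 F.2.1 _ (Finset.erase_subset _ _), ?_⟩
    rw [Finset.card_erase_of_mem i.2, F.2.2, Nat.add_sub_cancel]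

/-- By down-closure every face of a boundary is present, so whether a chain is a cycle only
depends on the faces of cardinality `m`. -/
lemma ker_bdryFrom_ne_bot_of_faces_eq (hΓ : DownClosed Γ) (hΓ' : DownClosed Γ')
    (hsame : ∀ F : Finset (Fin N), F.card = m → (F ∈ Γ ↔ F ∈ Γ'))
    (h : LinearMap.ker (bdryFrom K Γ m) ≠ ⊥) : LinearMap.ker (bdryFrom K Γ' m) ≠ ⊥ := by
  obtain ⟨c, hc, hc0⟩ := (Submodule.ne_bot_iff _).mp h
  let e : {F // F ∈ Γ ∧ F.card = m} ≃ {F // F ∈ Γ' ∧ F.card = m} :=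
    Equiv.subtypeEquivRight fun F => and_congr_left fun hF => hsame F hF
  refine (Submodule.ne_bot_iff _).mpr ⟨Finsupp.equivMapDomain e c, ?_, ?_⟩
  · rw [LinearMap.mem_ker] at hc ⊢
    cases m with
    | zero => rfl
    | succ m =>
      refine (bdry_eq_zero_iff hΓ' _).mpr fun G => ?_
      rw [Finsupp.sum_equivMapDomain]
      exact (bdry_eq_zero_iff hΓ c).mp hc G
  · exact fun h0 => hc0 <|
      (Finsupp.equivCongrLeft e).injective (h0.trans Finsupp.equivMapDomain_zero.symm)

lemma nontrivial_homologyAtLevel_congr (hΓ : DownClosed Γ) (hΓ' : DownClosed Γ')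
    (hcard : ∀ F ∈ Γ, F.card ≤ m) (hcard' : ∀ F ∈ Γ', F.card ≤ m)
    (hsame : ∀ F : Finset (Fin N), F.card = m → (F ∈ Γ ↔ F ∈ Γ')) :
    Nontrivial (homologyAtLevel K Γ m) ↔ Nontrivial (homologyAtLevel K Γ' m) := by
  rw [nontrivial_homologyAtLevel_iff hcard, nontrivial_homologyAtLevel_iff hcard']
  exact ⟨ker_bdryFrom_ne_bot_of_faces_eq hΓ hΓ' hsame,
    ker_bdryFrom_ne_bot_of_faces_eq hΓ' hΓ fun F hF => (hsame F hF).symm⟩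

end TopHomology

lemma nontrivial_homologyAtLevel_degreeComplex_symbolicPowerSR_iff {Δ : Set (Finset (Fin N))}
    (hΔ : DownClosed Δ) {k : ℕ} (hdim : ∀ G ∈ Δ, G.card ≤ k + 1) {n : ℕ} (hn : 1 ≤ n)
    {α : Fin N → ℤ} {m : ℕ} (hm : m + (negSupp α).card = k + 1) :
    Nontrivial (homologyAtLevel K (degreeComplex K (symbolicPowerSR K Δ n) α) m) ↔
      Nontrivial (homologyAtLevel K (degreeComplex K (stanleyReisner K Δ ^ n) α) m) := by
  have hpow : complexOfIdeal K (stanleyReisner K Δ ^ n) ⊆ Δ :=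
    complexOfIdeal_stanleyReisner_pow_subset n
  have hsym : complexOfIdeal K (symbolicPowerSR K Δ n) ⊆ Δ := by
    rwa [complexOfIdeal_symbolicPowerSR hΔ hn]
  refine nontrivial_homologyAtLevel_congr degreeComplex_downClosed degreeComplex_downClosed
    (fun F hF => by have := card_add_card_negSupp_le hsym hdim hF; omega)
    (fun F hF => by have := card_add_card_negSupp_le hpow hdim hF; omega) fun F hFm => ?_
  have hfacet {J : Ideal (MvPolynomial (Fin N) K)} (hJ : complexOfIdeal K J ⊆ Δ)
      (hF : F ∈ degreeComplex K J α) : F ∪ negSupp α ∈ facets Δ :=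
    mem_facets_of_card_eq hdim (hJ (union_negSupp_mem_complexOfIdeal hF))
      (by rw [Finset.card_union_of_disjoint hF.1, hFm, hm])
  exact ⟨fun hF => (mem_degreeComplex_symbolicPowerSR_iff hΔ (hfacet hsym hF) n).mp hF,
    fun hF => (mem_degreeComplex_symbolicPowerSR_iff hΔ (hfacet hpow hF) n).mpr hF⟩

theorem aInvariant_symbolicPower_eq_pow_general
    (Δ : Set (Finset (Fin N))) (hΔ : DownClosed Δ) (k : ℕ)
    (hdim : ∀ G ∈ Δ, G.card ≤ k + 1)
    (n : ℕ) (hn : 1 ≤ n) :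
    aInvariant K (k + 1) (symbolicPowerSR K Δ n) =
      aInvariant K (k + 1) ((stanleyReisner K Δ) ^ n) := by
  unfold aInvariant localCohNonzeroDegrees reducedHomologyNonzero
  rw [complexOfIdeal_symbolicPowerSR hΔ hn]
  congr 1
  ext t
  refine exists_congr fun α => and_congr_right fun _ => and_congr_right fun _ =>
    exists_congr fun m => and_congr_right fun hm => ?_
  exact nontrivial_homologyAtLevel_degreeComplex_symbolicPowerSR_iff hΔ hdim hn (by omega)

/-- Let `Δ` be a `k`-dimensional simplicial complex on `[s]` with
Stanley–Reisner ideal `I_Δ ⊆ S = K[x₁,…,x_s]`. Then for all `n ≥ 1` the top `a`-invariants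
of the ordinary and symbolic powers coincide: `a_{k+1}(S/I_Δ^{(n)}) = a_{k+1}(S/I_Δ^n)`. -/
theorem aInvariant_symbolicPower_eq_pow
    (Δ : Set (Finset (Fin N))) (hΔ : DownClosed Δ) (k : ℕ)
    (hdim : ∀ G ∈ Δ, G.card ≤ k + 1) (hex : ∃ G ∈ Δ, G.card = k + 1)
    (n : ℕ) (hn : 1 ≤ n) :
    aInvariant K (k + 1) (symbolicPowerSR K Δ n) =
      aInvariant K (k + 1) ((stanleyReisner K Δ) ^ n) :=
  aInvariant_symbolicPower_eq_pow_general Δ hΔ k hdim n hn
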